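/- arXiv:1901.06375 — 4 statements merged into one kernel-verified Lean document; each statement's English description precedes it below -/
import Mathlib

section
/- The set of positive integers r such that 24/r is a 2-step relation number has natural density 1; that is, lim_{N→∞} #{r ∈ [1,N] : 24/r is a 2-step relation number}/N = 1. -/
/-- `a = [[1,0],[1,1]]` as an element of `SL(2, ℂ)`. -/
def matA : Matrix.SpecialLinearGroup (Fin 2) ℂ :=
  ⟨!![1, 0; 1, 1], by simp [Matrix.det_fin_two_of]⟩

/-- `b_q = [[1,q],[0,1]]` as an element of `SL(2, ℂ)`. -/
def matB (q : ℂ) : Matrix.SpecialLinearGroup (Fin 2) ℂ :=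
  ⟨!![1, q; 0, 1], by simp [Matrix.det_fin_two_of]⟩

/-- `q` is a relation number: the homomorphism `F₂ → SL(2,ℂ)`, `x ↦ a`, `y ↦ b_q`,
is not injective. -/
def IsRelationNumber (q : ℂ) : Prop :=
  ¬ Function.Injective
    (FreeGroup.lift (fun i : Bool => if i then matA else matB q) :
      FreeGroup Bool →* Matrix.SpecialLinearGroup (Fin 2) ℂ)

/-- `q` is an `ℓ`-step relation number: there are `k ≤ ℓ` and nonzero integers
`m_1, …, m_{2k+1}` with `b_q^{m_1} a^{m_2} ⋯ b_q^{m_{2k+1}}` lower triangular. -/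
def IsStepRelationNumber (ℓ : ℕ) (q : ℂ) : Prop :=
  ∃ k : ℕ, k ≤ ℓ ∧ ∃ m : Fin (2 * k + 1) → ℤ, (∀ i, m i ≠ 0) ∧
    ((List.ofFn (fun i : Fin (2 * k + 1) =>
      (if (i : ℕ) % 2 = 0 then matB q else matA) ^ (m i))).prod).val 0 1 = 0

/-- The residue class `w + smℤ` is `s`-good with good representative `w`. -/
def IsGoodRep (s w m : ℤ) : Prop :=
  ∃ y : ℤ, y * (Int.gcd w (s * m) : ℤ) ∣ m * (Int.gcd w s : ℤ) ∧
    (w ∣ s * m * y + (Int.gcd w (s * m) : ℤ) ∨ w ∣ s * m * y - (Int.gcd w (s * m) : ℤ))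

def matA' (x : ℂ) : Matrix.SpecialLinearGroup (Fin 2) ℂ :=
  ⟨!![1, 0; x, 1], by simp [Matrix.det_fin_two_of]⟩

lemma matB_mul (x y : ℂ) : matB x * matB y = matB (x + y) := by
  apply Subtype.ext
  show (matB x).val * (matB y).val = (matB (x + y)).val
  simp [matB, Matrix.SpecialLinearGroup.coe_mul, Matrix.mul_fin_two, add_comm]

lemma matA'_mul (x y : ℂ) : matA' x * matA' y = matA' (x + y) := by
  apply Subtype.ext
  show (matA' x).val * (matA' y).val = (matA' (x + y)).val
  simp [matA', Matrix.SpecialLinearGroup.coe_mul, Matrix.mul_fin_two, add_comm]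

lemma matB_zero : matB 0 = 1 :=
  Subtype.ext (by simp [matB, Matrix.one_fin_two])

lemma matA'_zero : matA' 0 = 1 :=
  Subtype.ext (by simp [matA', Matrix.one_fin_two])

lemma matB_congr {x y : ℂ} (h : x = y) : matB x = matB y := by rw [h]
lemma matA'_congr {x y : ℂ} (h : x = y) : matA' x = matA' y := by rw [h]

lemma matB_zpow (q : ℂ) (m : ℤ) : matB q ^ m = matB (m * q) := by
  have hpow : ∀ k : ℕ, matB q ^ k = matB (k * q) := by
    intro k
    induction k with
    | zero => simpa using matB_zero.symm
    | succ n ih =>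
        rw [pow_succ, ih, matB_mul]
        exact matB_congr (by push_cast; ring)
  have hinv : ∀ x : ℂ, (matB x)⁻¹ = matB (-x) := by
    intro x
    rw [inv_eq_iff_mul_eq_one, matB_mul]
    simpa using matB_zero
  cases m with
  | ofNat k => simpa using hpow k
  | negSucc k =>
      rw [zpow_negSucc, hpow, hinv]
      exact matB_congr (by push_cast; ring)

lemma matA_zpow (m : ℤ) : matA ^ m = matA' m := by
  have hA : matA = matA' 1 := Subtype.ext (by simp [matA, matA'])
  have hpow : ∀ k : ℕ, matA' 1 ^ k = matA' k := by
    intro k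
    induction k with
    | zero => simpa using matA'_zero.symm
    | succ n ih =>
        rw [pow_succ, ih, matA'_mul]
        exact matA'_congr (by push_cast; ring)
  have hinv : ∀ x : ℂ, (matA' x)⁻¹ = matA' (-x) := by
    intro x
    rw [inv_eq_iff_mul_eq_one, matA'_mul]
    simpa using matA'_zero
  rw [hA]
  cases m with
  | ofNat k => simpa using hpow k
  | negSucc k =>
      rw [zpow_negSucc, hpow, hinv]
      exact matA'_congr (by push_cast; ring)

example (q : ℂ) (t n s : ℤ) :
    ((List.ofFn (fun i : Fin (2 * 2 + 1) =>
      (if (i : ℕ) % 2 = 0 then matB q else matA) ^ ((![t, n, s, n, t]) i))).prod).val 0 1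
    = q * ((1 + q*t*n) * (s*(1 + q*t*n) + 2*t)) := by
  simp only [List.ofFn_succ, List.prod_cons, List.prod_nil, Fin.isValue]
  norm_num [matB_zpow, matA_zpow]
  simp [matB, matA', Matrix.SpecialLinearGroup.coe_mul, Matrix.mul_fin_two]
  ring

lemma entry_formula (q : ℂ) (t n s : ℤ) :
    ((List.ofFn (fun i : Fin (2 * 2 + 1) =>
      (if (i : ℕ) % 2 = 0 then matB q else matA) ^ ((![t, n, s, n, t]) i))).prod).val 0 1
    = q * ((1 + q*t*n) * (s*(1 + q*t*n) + 2*t)) := by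
  simp only [List.ofFn_succ, List.prod_cons, List.prod_nil, Fin.isValue]
  norm_num [matB_zpow, matA_zpow]
  simp [matB, matA', Matrix.SpecialLinearGroup.coe_mul, Matrix.mul_fin_two]
  ring

lemma step_of_ns {r : ℕ} (hr : 1 ≤ r) (n s : ℤ) (hn : n ≠ 0) (hs : s ≠ 0)
    (h : s * (1 + 24 * n) = -2 * (r : ℤ)) :
    IsStepRelationNumber 2 ((24 : ℂ) / (r : ℂ)) := by
  refine ⟨2, le_refl _, ![(r : ℤ), n, s, n, (r : ℤ)], ?_, ?_⟩
  · intro i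
    fin_cases i <;> simp [hn, hs] <;> omega
  · rw [entry_formula]
    have hr0 : (r : ℂ) ≠ 0 := by
      have : r ≠ 0 := by omega
      exact_mod_cast this
    have h1 : (24 : ℂ) / (r : ℂ) * ((r : ℤ) : ℂ) = 24 := by
      push_cast; field_simp
    have h2 : (24 : ℂ) / (r : ℂ) * ((r : ℤ) : ℂ) * (n : ℂ) = 24 * n := by
      rw [h1]
    have h3 : (s : ℂ) * (1 + 24 * (n : ℂ)) = -2 * (r : ℂ) := by
      exact_mod_cast congrArg (fun z : ℤ => (z : ℂ)) h
    rw [mul_assoc ((24:ℂ)/(r:ℂ))] at *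
    rw [h2]
    have : (s:ℂ) * (1 + 24 * (n:ℂ)) + 2 * ((r:ℤ):ℂ) = 0 := by
      rw [h3]; push_cast; ring
    rw [this, mul_zero, mul_zero]

def GoodDiv (r : ℕ) : Prop := ∃ d, d ∣ r ∧ 1 < d ∧ (d % 24 = 1 ∨ d % 24 = 23)

lemma step_of_goodDiv {r : ℕ} (hr : 1 ≤ r) (hg : GoodDiv r) :
    IsStepRelationNumber 2 ((24 : ℂ) / (r : ℂ)) := by
  obtain ⟨d, hdr, hd1, h24⟩ := hg
  obtain ⟨c, hc⟩ := hdr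
  have hc1 : 1 ≤ c := by
    rcases Nat.eq_zero_or_pos c with h | h
    · subst h; simp at hc; omega
    · exact h
  have hde : d = 24 * (d / 24) + d % 24 := by omega
  rcases h24 with h24 | h24
  · have he1 : 1 ≤ d / 24 := by omega
    refine step_of_ns hr (d / 24 : ℕ) (-2 * (c : ℤ)) (by omega) (by omega) ?_
    have hd' : (d : ℤ) = 24 * (d / 24 : ℕ) + 1 := by exact_mod_cast by omega
    have hr' : (r : ℤ) = (d : ℤ) * (c : ℤ) := by exact_mod_cast hc
    linear_combination (2 * (c : ℤ)) * hd' + 2 * hr'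
  · refine step_of_ns hr (-(d / 24 : ℕ) - 1) (2 * (c : ℤ)) (by omega) (by omega) ?_
    have hd' : (d : ℤ) = 24 * (d / 24 : ℕ) + 23 := by exact_mod_cast by omega
    have hr' : (r : ℤ) = (d : ℤ) * (c : ℤ) := by exact_mod_cast hc
    linear_combination (2 * (c : ℤ)) * hd' + 2 * hr'

lemma prime_mod24 {p : ℕ} (hp : p.Prime) (h3 : 3 < p) :
    p % 24 = 1 ∨ p % 24 = 5 ∨ p % 24 = 7 ∨ p % 24 = 11 ∨ p % 24 = 13 ∨
      p % 24 = 17 ∨ p % 24 = 19 ∨ p % 24 = 23 := by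
  have h2 : ¬ (2 ∣ p) := fun h => by
    have := (Nat.prime_dvd_prime_iff_eq Nat.prime_two hp).mp h; omega
  have h3' : ¬ (3 ∣ p) := fun h => by
    have := (Nat.prime_dvd_prime_iff_eq Nat.prime_three hp).mp h; omega
  omega

lemma goodDiv_of_three {r p q u : ℕ} (hp : p.Prime) (hq : q.Prime) (hu : u.Prime)
    (h3p : 3 < p) (h3q : 3 < q) (h3u : 3 < u)
    (hpq : p ≠ q) (hpu : p ≠ u) (hqu : q ≠ u)
    (hpr : p ∣ r) (hqr : q ∣ r) (hur : u ∣ r) : GoodDiv r := by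
  have key : ∀ x ∈ ([1,5,7,11,13,17,19,23] : List ℕ), ∀ y ∈ ([1,5,7,11,13,17,19,23] : List ℕ),
      ∀ z ∈ ([1,5,7,11,13,17,19,23] : List ℕ),
      (x = 1 ∨ x = 23) ∨ (y = 1 ∨ y = 23) ∨ (z = 1 ∨ z = 23) ∨
      ((x*y) % 24 = 1 ∨ (x*y) % 24 = 23) ∨
      ((x*z) % 24 = 1 ∨ (x*z) % 24 = 23) ∨ ((y*z) % 24 = 1 ∨ (y*z) % 24 = 23) ∨
      ((x*y*z) % 24 = 1 ∨ (x*y*z) % 24 = 23) := by decide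
  have hxm : p % 24 ∈ ([1,5,7,11,13,17,19,23] : List ℕ) := by
    rcases prime_mod24 hp h3p with h|h|h|h|h|h|h|h <;> simp [h]
  have hym : q % 24 ∈ ([1,5,7,11,13,17,19,23] : List ℕ) := by
    rcases prime_mod24 hq h3q with h|h|h|h|h|h|h|h <;> simp [h]
  have hzm : u % 24 ∈ ([1,5,7,11,13,17,19,23] : List ℕ) := by
    rcases prime_mod24 hu h3u with h|h|h|h|h|h|h|h <;> simp [h]
  have m3 : ∀ a b c : ℕ, (a*b*c) % 24 = ((a%24)*(b%24)*(c%24)) % 24 := by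
    intro a b c
    conv_lhs => rw [Nat.mul_mod, Nat.mul_mod a b]
    rw [Nat.mod_mul_mod]
  rcases key _ hxm _ hym _ hzm with h | h | h | h | h | h | h
  · exact ⟨p, hpr, hp.one_lt, h⟩
  · exact ⟨q, hqr, hq.one_lt, h⟩
  · exact ⟨u, hur, hu.one_lt, h⟩
  · refine ⟨p*q, ((Nat.coprime_primes hp hq).mpr hpq).mul_dvd_of_dvd_of_dvd hpr hqr,
      hp.one_lt.trans_le (Nat.le_mul_of_pos_right p hq.pos), ?_⟩
    rw [Nat.mul_mod]; exact h
  · refine ⟨p*u, ((Nat.coprime_primes hp hu).mpr hpu).mul_dvd_of_dvd_of_dvd hpr hur,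
      hp.one_lt.trans_le (Nat.le_mul_of_pos_right p hu.pos), ?_⟩
    rw [Nat.mul_mod]; exact h
  · refine ⟨q*u, ((Nat.coprime_primes hq hu).mpr hqu).mul_dvd_of_dvd_of_dvd hqr hur,
      hq.one_lt.trans_le (Nat.le_mul_of_pos_right q hu.pos), ?_⟩
    rw [Nat.mul_mod]; exact h
  · refine ⟨p*q*u, (((Nat.coprime_primes hp hu).mpr hpu).mul ((Nat.coprime_primes hq hu).mpr hqu)).mul_dvd_of_dvd_of_dvd
      (((Nat.coprime_primes hp hq).mpr hpq).mul_dvd_of_dvd_of_dvd hpr hqr) hur, ?_, ?_⟩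
    · calc 1 < p := hp.one_lt
        _ ≤ p*q := Nat.le_mul_of_pos_right p hq.pos
        _ ≤ p*q*u := Nat.le_mul_of_pos_right _ hu.pos
    · rw [m3]; exact h



lemma count_mult (N d : ℕ) :
    ((Finset.Icc 1 N).filter (fun n => d ∣ n)).card = N / d := by
  have h : Finset.Icc 1 N = Finset.Ioc 0 N := by
    rw [← Finset.Icc_add_one_left_eq_Ioc]; rfl
  rw [h]
  exact Nat.Ioc_filter_dvd_card_eq_div N d

lemma cast_div_lb (N d : ℕ) (hd : 0 < d) : (N : ℝ) / d - 1 ≤ ((N / d : ℕ) : ℝ) := by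
  have hd' : (0:ℝ) < d := by exact_mod_cast hd
  have h2 : (N:ℝ) < (d:ℝ) * ((N/d:ℕ):ℝ) + d := by
    have h3 := Nat.div_add_mod N d
    have h4 := Nat.mod_lt N hd
    exact_mod_cast (by omega : N < d*(N/d) + d)
  rw [sub_le_iff_le_add, div_le_iff₀ hd']
  nlinarith

lemma sum_T (Q : Finset ℕ) (N : ℕ) :
    ∑ n ∈ Finset.Icc 1 N, ((Q.filter (· ∣ n)).card : ℝ)
      = ∑ p ∈ Q, ((N / p : ℕ) : ℝ) := by
  have h1 : ∀ n, ((Q.filter (· ∣ n)).card : ℝ) = ∑ p ∈ Q, (if p ∣ n then (1:ℝ) else 0) := by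
    intro n
    rw [Finset.card_filter]
    push_cast
    rfl
  simp_rw [h1]
  rw [Finset.sum_comm]
  congr 1
  ext p
  rw [← Finset.sum_filter, Finset.sum_const, ← count_mult N p]
  simp

lemma sum_T_sq (Q : Finset ℕ) (N : ℕ) :
    ∑ n ∈ Finset.Icc 1 N, (((Q.filter (· ∣ n)).card : ℝ))^2
      = ∑ p ∈ Q, ∑ q ∈ Q, ((N / Nat.lcm p q : ℕ) : ℝ) := by
  have h1 : ∀ n, ((Q.filter (· ∣ n)).card : ℝ) = ∑ p ∈ Q, (if p ∣ n then (1:ℝ) else 0) := by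
    intro n
    rw [Finset.card_filter]; push_cast; rfl
  have h2 : ∀ n, (((Q.filter (· ∣ n)).card : ℝ))^2
      = ∑ p ∈ Q, ∑ q ∈ Q, (if Nat.lcm p q ∣ n then (1:ℝ) else 0) := by
    intro n
    rw [sq, h1 n, Finset.sum_mul_sum]
    congr 1; ext p; congr 1; ext q
    by_cases hp : p ∣ n <;> by_cases hq : q ∣ n <;>
      simp [hp, hq, Nat.lcm_dvd_iff]
  simp_rw [h2]
  rw [Finset.sum_comm]
  congr 1; ext p
  rw [Finset.sum_comm]
  congr 1; ext q
  rw [← Finset.sum_filter, Finset.sum_const, ← count_mult N (Nat.lcm p q)]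
  simp

lemma sum_T_lb (Q : Finset ℕ) (hQ : ∀ p ∈ Q, p.Prime) (N : ℕ) :
    (N:ℝ) * (∑ p ∈ Q, (1:ℝ)/p) - Q.card ≤ ∑ n ∈ Finset.Icc 1 N, ((Q.filter (· ∣ n)).card : ℝ) := by
  rw [sum_T, Finset.mul_sum]
  have hcard : (Q.card : ℝ) = ∑ _p ∈ Q, (1:ℝ) := by simp
  rw [hcard, ← Finset.sum_sub_distrib]
  apply Finset.sum_le_sum
  intro p hp
  have hp0 : 0 < p := (hQ p hp).pos
  have := cast_div_lb N p hp0
  have : (N:ℝ) * (1/p) - 1 ≤ ((N/p:ℕ):ℝ) := by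
    rw [mul_one_div]; exact this
  linarith

lemma sum_T_sq_ub (Q : Finset ℕ) (hQ : ∀ p ∈ Q, p.Prime) (N : ℕ) :
    ∑ n ∈ Finset.Icc 1 N, (((Q.filter (· ∣ n)).card : ℝ))^2
      ≤ (N:ℝ) * (∑ p ∈ Q, (1:ℝ)/p) + (N:ℝ) * (∑ p ∈ Q, (1:ℝ)/p)^2 := by
  rw [sum_T_sq]
  have step1 : ∀ p ∈ Q, ∑ q ∈ Q, ((N / Nat.lcm p q : ℕ) : ℝ)
      ≤ ((N/p : ℕ):ℝ) + ∑ q ∈ Q, (N:ℝ) * ((1:ℝ)/p) * ((1:ℝ)/q) := by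
    intro p hp
    have hsplit := Finset.sum_erase_add Q (fun q => ((N / Nat.lcm p q : ℕ) : ℝ)) hp
    rw [← hsplit]
    simp only [Nat.lcm_self]
    rw [add_comm]
    refine add_le_add le_rfl ?_
    have hsub : ∑ q ∈ Q.erase p, ((N / Nat.lcm p q : ℕ) : ℝ)
        ≤ ∑ q ∈ Q.erase p, (N:ℝ) * ((1:ℝ)/p) * ((1:ℝ)/q) := by
      apply Finset.sum_le_sum
      intro q hq
      have hq' : q ∈ Q := Finset.mem_of_mem_erase hq
      have hne : q ≠ p := Finset.ne_of_mem_erase hq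
      have hl : Nat.lcm p q = p * q :=
        Nat.Coprime.lcm_eq_mul ((Nat.coprime_primes (hQ p hp) (hQ q hq')).mpr hne.symm)
      rw [hl]
      calc ((N / (p*q) : ℕ) : ℝ) ≤ (N:ℝ) / ((p:ℝ)*(q:ℝ)) := by
            push_cast [← Nat.cast_mul]
            exact_mod_cast Nat.cast_div_le
        _ = (N:ℝ) * ((1:ℝ)/p) * ((1:ℝ)/q) := by
            field_simp
    refine hsub.trans ?_
    apply Finset.sum_le_sum_of_subset_of_nonneg (Finset.erase_subset p Q)
    intro q hq _
    positivity
  calc ∑ p ∈ Q, ∑ q ∈ Q, ((N / Nat.lcm p q : ℕ) : ℝ)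
      ≤ ∑ p ∈ Q, (((N/p : ℕ):ℝ) + ∑ q ∈ Q, (N:ℝ) * ((1:ℝ)/p) * ((1:ℝ)/q)) :=
        Finset.sum_le_sum step1
    _ = ∑ p ∈ Q, ((N/p : ℕ):ℝ) + ∑ p ∈ Q, ∑ q ∈ Q, (N:ℝ) * ((1:ℝ)/p) * ((1:ℝ)/q) := by
        rw [Finset.sum_add_distrib]
    _ ≤ (N:ℝ) * (∑ p ∈ Q, (1:ℝ)/p) + (N:ℝ) * (∑ p ∈ Q, (1:ℝ)/p)^2 := by
        refine add_le_add ?_ ?_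
        · rw [Finset.mul_sum]
          apply Finset.sum_le_sum
          intro p hp
          rw [mul_one_div]
          exact Nat.cast_div_le.trans (by norm_num)
        · rw [sq, Finset.sum_mul_sum, Finset.mul_sum]
          apply Finset.sum_le_sum
          intro p hp
          rw [Finset.mul_sum]
          apply Finset.sum_le_sum
          intro q hq
          ring_nf
          exact le_rfl

lemma sieve_bound (Q : Finset ℕ) (hQ : ∀ p ∈ Q, p.Prime) (N : ℕ)
    (hL : 4 ≤ ∑ p ∈ Q, (1:ℝ)/p) :
    (((Finset.Icc 1 N).filter (fun n => (Q.filter (· ∣ n)).card ≤ 2)).card : ℝ)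
        * ((∑ p ∈ Q, (1:ℝ)/p) - 2)^2
      ≤ (N:ℝ) * (∑ p ∈ Q, (1:ℝ)/p) + 2 * (∑ p ∈ Q, (1:ℝ)/p) * Q.card := by
  set L := ∑ p ∈ Q, (1:ℝ)/p with hLdef
  have h1 : (((Finset.Icc 1 N).filter (fun n => (Q.filter (· ∣ n)).card ≤ 2)).card : ℝ) * (L-2)^2
      ≤ ∑ n ∈ Finset.Icc 1 N, (L - ((Q.filter (· ∣ n)).card : ℝ))^2 := by
    calc (((Finset.Icc 1 N).filter (fun n => (Q.filter (· ∣ n)).card ≤ 2)).card : ℝ) * (L-2)^2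
        = ∑ _n ∈ (Finset.Icc 1 N).filter (fun n => (Q.filter (· ∣ n)).card ≤ 2), (L-2)^2 := by
          rw [Finset.sum_const, nsmul_eq_mul]
      _ ≤ ∑ n ∈ (Finset.Icc 1 N).filter (fun n => (Q.filter (· ∣ n)).card ≤ 2),
            (L - ((Q.filter (· ∣ n)).card : ℝ))^2 := by
          apply Finset.sum_le_sum
          intro n hn
          have hTn : ((Q.filter (· ∣ n)).card : ℝ) ≤ 2 := by
            exact_mod_cast (Finset.mem_filter.mp hn).2
          have h0 : (0:ℝ) ≤ L - 2 := by linarith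
          exact pow_le_pow_left₀ h0 (by linarith) 2
      _ ≤ ∑ n ∈ Finset.Icc 1 N, (L - ((Q.filter (· ∣ n)).card : ℝ))^2 :=
          Finset.sum_le_sum_of_subset_of_nonneg (Finset.filter_subset _ _)
            (fun _ _ _ => sq_nonneg _)
  have h2 : ∑ n ∈ Finset.Icc 1 N, (L - ((Q.filter (· ∣ n)).card : ℝ))^2
      = (N:ℝ)*L^2 - 2*L*(∑ n ∈ Finset.Icc 1 N, ((Q.filter (· ∣ n)).card : ℝ))
        + ∑ n ∈ Finset.Icc 1 N, (((Q.filter (· ∣ n)).card : ℝ))^2 := by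
    have e : ∀ n : ℕ, (L - ((Q.filter (· ∣ n)).card : ℝ))^2
        = L^2 - 2*L*((Q.filter (· ∣ n)).card : ℝ) + (((Q.filter (· ∣ n)).card : ℝ))^2 :=
      fun n => by ring
    simp_rw [e]
    rw [Finset.sum_add_distrib, Finset.sum_sub_distrib, Finset.sum_const, Nat.card_Icc,
      ← Finset.mul_sum]
    simp [nsmul_eq_mul]
  have h3 := sum_T_lb Q hQ N
  have h4 := sum_T_sq_ub Q hQ N
  have h5 : 2*L*((N:ℝ)*L - Q.card) ≤ 2*L*(∑ n ∈ Finset.Icc 1 N, ((Q.filter (· ∣ n)).card : ℝ)) := by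
    apply mul_le_mul_of_nonneg_left h3
    linarith
  nlinarith [h1, h2, h4, h5]

lemma exists_Q (C : ℝ) : ∃ Q : Finset ℕ, (∀ p ∈ Q, p.Prime ∧ 3 < p) ∧ C ≤ ∑ p ∈ Q, (1:ℝ)/p := by
  classical
  set f : ℕ → ℝ := {p | p.Prime}.indicator (fun n => 1/(n:ℝ)) with hf
  have hf0 : 0 ≤ f := fun n => Set.indicator_nonneg (fun i _ => by positivity) n
  have hns := not_summable_one_div_on_primes
  have hub : ¬ ∀ u : Finset ℕ, ∑ i ∈ u, f i ≤ C + 1 := by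
    intro h
    exact hns (summable_of_sum_le hf0 h)
  push_neg at hub
  obtain ⟨u, hu⟩ := hub
  refine ⟨u.filter (fun p => p.Prime ∧ 3 < p), fun p hp => (Finset.mem_filter.mp hp).2, ?_⟩
  have e1 : ∑ i ∈ u, f i = ∑ i ∈ u.filter (fun p => p.Prime), 1/(i:ℝ) := by
    rw [Finset.sum_filter]
    apply Finset.sum_congr rfl
    intro i _
    by_cases h : i.Prime <;> simp [hf, Set.indicator_apply, h]
  have e2 : ∑ i ∈ u.filter (fun p => p.Prime), 1/(i:ℝ)
      = (∑ i ∈ (u.filter (fun p => p.Prime)).filter (fun p => 3 < p), 1/(i:ℝ))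
        + ∑ i ∈ (u.filter (fun p => p.Prime)).filter (fun p => ¬ 3 < p), 1/(i:ℝ) :=
    (Finset.sum_filter_add_sum_filter_not _ _ _).symm
  have e3 : (u.filter (fun p => p.Prime)).filter (fun p => 3 < p)
      = u.filter (fun p => p.Prime ∧ 3 < p) := by
    rw [Finset.filter_filter]
  have hsmall : ∑ i ∈ (u.filter (fun p => p.Prime)).filter (fun p => ¬ 3 < p), 1/(i:ℝ) ≤ 1 := by
    have hsub : (u.filter (fun p => p.Prime)).filter (fun p => ¬ 3 < p) ⊆ ({2,3} : Finset ℕ) := by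
      intro p hp
      have h1 := Finset.mem_filter.mp hp
      have h2 := Finset.mem_filter.mp h1.1
      have hple : p ≤ 3 := by omega
      have hp2 : 2 ≤ p := h2.2.two_le
      interval_cases p
      · simp
      · simp
    calc ∑ i ∈ (u.filter (fun p => p.Prime)).filter (fun p => ¬ 3 < p), 1/(i:ℝ)
        ≤ ∑ i ∈ ({2,3} : Finset ℕ), 1/(i:ℝ) :=
          Finset.sum_le_sum_of_subset_of_nonneg hsub (fun i _ _ => by positivity)
      _ ≤ 1 := by norm_num
  have := hu.le
  rw [e1, e2, e3] at this
  linarith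


set_option maxHeartbeats 2000000 in
theorem stmt2 :
    Filter.Tendsto
      (fun N : ℕ =>
        (({r : ℕ | 1 ≤ r ∧ r ≤ N ∧ IsStepRelationNumber 2 ((24 : ℂ) / (r : ℂ))}.ncard : ℝ)
          / (N : ℝ)))
      Filter.atTop (nhds 1) := by
  classical
  have hset : ∀ N : ℕ, {r : ℕ | 1 ≤ r ∧ r ≤ N ∧ IsStepRelationNumber 2 ((24:ℂ)/(r:ℂ))}
      = ↑((Finset.Icc 1 N).filter (fun r : ℕ => IsStepRelationNumber 2 ((24:ℂ)/(r:ℂ)))) := by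
    intro N
    ext r
    simp [Finset.mem_filter, Finset.mem_Icc, and_assoc]
  rw [Metric.tendsto_atTop]
  intro ε hε
  set ε' := min ε 1 with hε'def
  have hε'pos : 0 < ε' := lt_min hε one_pos
  have hε'le : ε' ≤ 1 := min_le_right _ _
  have hε'ε : ε' ≤ ε := min_le_left _ _
  obtain ⟨Q, hQp, hQL⟩ := exists_Q (max 4 (16/ε'))
  set L := ∑ p ∈ Q, (1:ℝ)/p with hLdef
  have hL4 : 4 ≤ L := le_trans (le_max_left _ _) hQL
  have hLε : 16/ε' ≤ L := le_trans (le_max_right _ _) hQL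
  have hLε' : 16 ≤ ε' * L := by
    rw [div_le_iff₀ hε'pos] at hLε
    linarith [hLε]
  have hk1 : 1 ≤ Q.card := by
    rcases Finset.eq_empty_or_nonempty Q with h | h
    · subst h; simp [hLdef] at hL4; linarith
    · exact Finset.card_pos.mpr h
  have hkR : (1:ℝ) ≤ Q.card := by exact_mod_cast hk1
  obtain ⟨N₀, hN₀⟩ := exists_nat_gt (8*L*Q.card/ε')
  refine ⟨max N₀ 1, fun N hN => ?_⟩
  have hN1 : 1 ≤ N := le_trans (le_max_right _ _) hN
  have hNr : (1:ℝ) ≤ N := by exact_mod_cast hN1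
  have hNRpos : (0:ℝ) < N := by linarith
  have hN0' : 8*L*Q.card/ε' < (N:ℝ) := by
    refine lt_of_lt_of_le hN₀ ?_
    exact_mod_cast le_trans (le_max_left _ _) hN
  have hN0'' : 8*L*Q.card < ε' * N := by
    rw [div_lt_iff₀ hε'pos] at hN0'
    linarith [hN0']
  set F := (Finset.Icc 1 N).filter (fun r : ℕ => IsStepRelationNumber 2 ((24:ℂ)/(r:ℂ))) with hF
  set Bad := (Finset.Icc 1 N).filter (fun r : ℕ => ¬ IsStepRelationNumber 2 ((24:ℂ)/(r:ℂ))) with hB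
  have hcards : F.card + Bad.card = N := by
    rw [hF, hB, Finset.card_filter_add_card_filter_not]
    simp [Nat.card_Icc]
  have hBadSub : Bad ⊆ (Finset.Icc 1 N).filter (fun n => (Q.filter (· ∣ n)).card ≤ 2) := by
    intro n hn
    have hmem := Finset.mem_filter.mp hn
    refine Finset.mem_filter.mpr ⟨hmem.1, ?_⟩
    by_contra hcard
    push_neg at hcard
    obtain ⟨a, b, c, ha, hb, hc, hab, hac, hbc⟩ := Finset.two_lt_card_iff.mp hcard
    have haQ := Finset.mem_filter.mp ha
    have hbQ := Finset.mem_filter.mp hb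
    have hcQ := Finset.mem_filter.mp hc
    have hgood : GoodDiv n :=
      goodDiv_of_three (hQp a haQ.1).1 (hQp b hbQ.1).1 (hQp c hcQ.1).1
        (hQp a haQ.1).2 (hQp b hbQ.1).2 (hQp c hcQ.1).2
        hab hac hbc haQ.2 hbQ.2 hcQ.2
    exact hmem.2 (step_of_goodDiv (Finset.mem_Icc.mp hmem.1).1 hgood)
  have hBadCount : (Bad.card : ℝ) * (L-2)^2 ≤ (N:ℝ)*L + 2*L*Q.card := by
    refine le_trans ?_ (sieve_bound Q (fun p hp => (hQp p hp).1) N hL4)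
    have : (Bad.card : ℝ) ≤
        (((Finset.Icc 1 N).filter (fun n => (Q.filter (· ∣ n)).card ≤ 2)).card : ℝ) := by
      exact_mod_cast Finset.card_le_card hBadSub
    have hsq : (0:ℝ) ≤ (L-2)^2 := sq_nonneg _
    exact mul_le_mul_of_nonneg_right this hsq
  have key : (N:ℝ)*L + 2*L*Q.card ≤ (ε'/2*N)*(L-2)^2 := by
    have h1 : (L/2)^2 ≤ (L-2)^2 := by nlinarith
    have h2 : (ε'/2*N)*(L/2)^2 = ε'*L*((N:ℝ)*L)/8 := by ring
    have h3 : 16*((N:ℝ)*L)/8 ≤ ε'*L*((N:ℝ)*L)/8 := by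
      have hNL : (0:ℝ) ≤ (N:ℝ)*L := by positivity
      have := mul_le_mul_of_nonneg_right hLε' hNL
      linarith
    have h4 : 2*L*(Q.card:ℝ) ≤ ε'*N/4 := by linarith
    have h5 : ε'*N/4 ≤ (N:ℝ)*L := by nlinarith
    have h6 : (ε'/2*N)*(L/2)^2 ≤ (ε'/2*N)*(L-2)^2 := by
      have : (0:ℝ) ≤ ε'/2*N := by positivity
      exact mul_le_mul_of_nonneg_left h1 this
    nlinarith
  have hBadN : (Bad.card : ℝ) ≤ ε'/2 * N := by
    have hsqpos : (0:ℝ) < (L-2)^2 := by nlinarith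
    have := hBadCount.trans key
    exact le_of_mul_le_mul_right this hsqpos
  rw [hset N, Set.ncard_coe_finset]
  have hFval : (F.card : ℝ) = (N:ℝ) - Bad.card := by
    have : (F.card : ℝ) + Bad.card = N := by exact_mod_cast hcards
    linarith
  rw [Real.dist_eq, hFval]
  have hbadnn : (0:ℝ) ≤ Bad.card := by positivity
  have habs : |((N:ℝ) - Bad.card)/N - 1| = (Bad.card:ℝ)/N := by
    rw [sub_div, div_self (ne_of_gt hNRpos), abs_sub_comm]
    rw [abs_of_nonneg]
    · ring_nf
    · have : (Bad.card:ℝ)/N ≥ 0 := by positivity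
      linarith [this]
  rw [habs]
  have : (Bad.card:ℝ)/N ≤ ε'/2 := by
    rw [div_le_iff₀ hNRpos]
    linarith [hBadN]
  calc (Bad.card:ℝ)/N ≤ ε'/2 := this
    _ < ε' := by linarith
    _ ≤ ε := hε'ε
end

section
/- Let s, r, N be positive integers. Then there exists a positive integer M = M(s,r,N) such that for all integers i with 0 ≤ i < N and all integers j ≠ 0, the number s/(r + i + sMj) is a 2-step relation number. -/
def matBc (x : ℂ) : Matrix.SpecialLinearGroup (Fin 2) ℂ :=
  ⟨!![1, x; 0, 1], by simp [Matrix.det_fin_two_of]⟩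

def matAc (x : ℂ) : Matrix.SpecialLinearGroup (Fin 2) ℂ :=
  ⟨!![1, 0; x, 1], by simp [Matrix.det_fin_two_of]⟩

lemma matBc_mul (x y : ℂ) : matBc x * matBc y = matBc (x + y) := by
  apply Subtype.ext
  show (matBc x).val * (matBc y).val = (matBc (x + y)).val
  simp [matBc, Matrix.mul_fin_two, add_comm]

lemma matAc_mul (x y : ℂ) : matAc x * matAc y = matAc (x + y) := by
  apply Subtype.ext
  show (matAc x).val * (matAc y).val = (matAc (x + y)).val
  simp [matAc, Matrix.mul_fin_two, add_comm]

lemma matBc_zero : matBc 0 = 1 := by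
  apply Subtype.ext
  simp [matBc]
  exact (Matrix.one_fin_two).symm

lemma matAc_zero : matAc 0 = 1 := by
  apply Subtype.ext
  simp [matAc]
  exact (Matrix.one_fin_two).symm

def psiB : Multiplicative ℂ →* Matrix.SpecialLinearGroup (Fin 2) ℂ where
  toFun x := matBc x.toAdd
  map_one' := matBc_zero
  map_mul' x y := by simp [toAdd_mul, ← matBc_mul]

def psiA : Multiplicative ℂ →* Matrix.SpecialLinearGroup (Fin 2) ℂ where
  toFun x := matAc x.toAdd
  map_one' := matAc_zero
  map_mul' x y := by simp [toAdd_mul, ← matAc_mul]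

lemma matBc_zpow (x : ℂ) (m : ℤ) : matBc x ^ m = matBc (m * x) := by
  have h := map_zpow psiB (Multiplicative.ofAdd x) m
  rw [← ofAdd_zsmul] at h
  simpa [psiB, zsmul_eq_mul] using h.symm

lemma matAc_zpow (x : ℂ) (m : ℤ) : matAc x ^ m = matAc (m * x) := by
  have h := map_zpow psiA (Multiplicative.ofAdd x) m
  rw [← ofAdd_zsmul] at h
  simpa [psiA, zsmul_eq_mul] using h.symm

lemma matB_eq (q : ℂ) : matB q = matBc q := rfl
lemma matA_eq : matA = matAc 1 := rfl

/-- The key one-step computation: for `q = s / w` with `w = u * (1 + s*c*j) ≠ 0`,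
the word `b^w a^(c*j) b^(-u)` is lower triangular. -/
lemma key (s u : ℕ) (c j : ℤ) (w : ℤ) (hw : w = (u : ℤ) * (1 + (s : ℤ) * c * j))
    (hwne : w ≠ 0) :
    ((matBc ((w : ℤ) * ((s : ℂ) / (w : ℂ))) *
      (matAc (((c * j : ℤ) : ℂ) * 1) *
        matBc (((-(u : ℤ)) : ℤ) * ((s : ℂ) / (w : ℂ))))).val) 0 1 = 0 := by
  have hwC : (w : ℂ) ≠ 0 := by exact_mod_cast hwne
  have hwCval : (w : ℂ) = (u : ℂ) * (1 + (s : ℂ) * (c : ℂ) * (j : ℂ)) := by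
    rw [hw]; push_cast; ring
  show ((!![1, (w : ℤ) * ((s : ℂ) / (w : ℂ)); 0, 1] : Matrix (Fin 2) (Fin 2) ℂ) *
      (!![1, 0; ((c * j : ℤ) : ℂ) * 1, 1] *
        !![1, ((-(u : ℤ) : ℤ) : ℂ) * ((s : ℂ) / (w : ℂ)); 0, 1])) 0 1 = 0
  simp [Matrix.mul_fin_two]
  push_cast
  field_simp
  rw [hwCval]
  ring

theorem stmt4 (s r N : ℕ) (hs : 0 < s) (hr : 0 < r) (hN : 0 < N) :
    ∃ M : ℕ, 0 < M ∧ ∀ i : ℕ, i < N → ∀ j : ℤ, j ≠ 0 →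
      IsStepRelationNumber 2
        ((s : ℂ) / ((((r : ℤ) + (i : ℤ) + (s : ℤ) * (M : ℤ) * j : ℤ) : ℂ))) := by
  refine ⟨2 * ∏ x ∈ Finset.range N, (r + x), by positivity, ?_⟩
  intro i hi j hj
  obtain ⟨c', hc'⟩ : (r + i) ∣ ∏ x ∈ Finset.range N, (r + x) :=
    Finset.dvd_prod_of_mem _ (Finset.mem_range.mpr hi)
  have hPpos : 0 < ∏ x ∈ Finset.range N, (r + x) := by positivity
  have hc'pos : 0 < c' := by
    rcases Nat.eq_zero_or_pos c' with h | h
    · rw [h, Nat.mul_zero] at hc'; omega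
    · exact h
  have hwe : (r : ℤ) + (i : ℤ) + (s : ℤ) * ((2 * ∏ x ∈ Finset.range N, (r + x) : ℕ) : ℤ) * j
      = ((r + i : ℕ) : ℤ) * (1 + (s : ℤ) * (2 * (c' : ℤ)) * j) := by
    push_cast [hc']
    ring
  have hbne : (1 + (s : ℤ) * (2 * (c' : ℤ)) * j) ≠ 0 := by
    intro h
    have h1 : (s : ℤ) * (2 * (c' : ℤ)) * j = -1 := by linarith
    have h2 : ((s : ℤ) * (2 * (c' : ℤ)) * j).natAbs = 1 := by rw [h1]; rfl
    rw [Int.natAbs_mul, Int.natAbs_mul, Int.natAbs_mul] at h2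
    simp only [Int.natAbs_natCast] at h2
    have hj1 : 1 ≤ j.natAbs := Int.natAbs_pos.mpr hj
    have h2' : s * (2 * c') * j.natAbs = 1 := by simpa using h2
    have h3 : 2 ≤ s * (2 * c') * j.natAbs := by
      calc 2 = 1 * (2 * 1) * 1 := by norm_num
        _ ≤ s * (2 * c') * j.natAbs :=
          Nat.mul_le_mul (Nat.mul_le_mul hs (by omega)) hj1
    omega
  have hwne : ((r + i : ℕ) : ℤ) * (1 + (s : ℤ) * (2 * (c' : ℤ)) * j) ≠ 0 :=
    mul_ne_zero (by exact_mod_cast (by omega : (r + i) ≠ 0)) hbne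
  rw [hwe]
  refine ⟨1, one_le_two,
    ![((r + i : ℕ) : ℤ) * (1 + (s : ℤ) * (2 * (c' : ℤ)) * j), (2 * (c' : ℤ)) * j, -((r + i : ℕ) : ℤ)],
    ?_, ?_⟩
  · intro i0
    fin_cases i0
    · simpa using hwne
    · simp only [Matrix.cons_val_one, Matrix.head_cons]
      exact mul_ne_zero (by positivity) hj
    · simp; omega
  · have hlist : (List.ofFn fun i0 : Fin (2 * 1 + 1) =>
        (if (i0 : ℕ) % 2 = 0 then
            matB ((s : ℂ) / ((((r + i : ℕ) : ℤ) * (1 + (s : ℤ) * (2 * (c' : ℤ)) * j) : ℤ) : ℂ))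
          else matA) ^
          (![((r + i : ℕ) : ℤ) * (1 + (s : ℤ) * (2 * (c' : ℤ)) * j), (2 * (c' : ℤ)) * j,
            -((r + i : ℕ) : ℤ)] i0)) =
        [matB ((s : ℂ) / ((((r + i : ℕ) : ℤ) * (1 + (s : ℤ) * (2 * (c' : ℤ)) * j) : ℤ) : ℂ)) ^
            (((r + i : ℕ) : ℤ) * (1 + (s : ℤ) * (2 * (c' : ℤ)) * j)),
          matA ^ ((2 * (c' : ℤ)) * j),
          matB ((s : ℂ) / ((((r + i : ℕ) : ℤ) * (1 + (s : ℤ) * (2 * (c' : ℤ)) * j) : ℤ) : ℂ)) ^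
            (-((r + i : ℕ) : ℤ))] := by
      simp [List.ofFn_succ]
    rw [hlist]
    simp only [List.prod_cons, List.prod_nil, mul_one]
    rw [matB_eq, matA_eq, matBc_zpow, matAc_zpow, matBc_zpow]
    exact key s (r + i) (2 * (c' : ℤ)) j _ rfl hwne
end

section
/- Let s > 1 be an integer and let w, m be nonzero integers such that w is a good representative of the s-good residue class w + smℤ. Then for every nonzero integer n, the residue class nw + snmℤ is s-good with good representative nw. -/
theorem stmt13 (s w m : ℤ) (hs : 1 < s) (hw : w ≠ 0) (hm : m ≠ 0)
    (hgood : IsGoodRep s w m) (n : ℤ) (hn : n ≠ 0) :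
    IsGoodRep s (n * w) (n * m) := by
  obtain ⟨y, h1, h2⟩ := hgood
  have hg : (Int.gcd (n * w) (s * (n * m)) : ℤ)
      = (n.natAbs : ℤ) * (Int.gcd w (s * m) : ℤ) := by
    rw [show s * (n * m) = n * (s * m) by ring, Int.gcd_mul_left]
    push_cast; ring
  refine ⟨y, ?_, ?_⟩
  · rw [hg]
    have h3 : y * ((n.natAbs : ℤ) * (Int.gcd w (s * m) : ℤ))
        ∣ (n.natAbs : ℤ) * (m * (Int.gcd w s : ℤ)) := by
      rw [show y * ((n.natAbs : ℤ) * (Int.gcd w (s * m) : ℤ))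
          = (n.natAbs : ℤ) * (y * (Int.gcd w (s * m) : ℤ)) by ring]
      exact mul_dvd_mul_left _ h1
    refine h3.trans ?_
    rw [show (n.natAbs : ℤ) * (m * (Int.gcd w s : ℤ))
        = ((n.natAbs : ℤ) * m) * (Int.gcd w s : ℤ) by ring,
      show n * m * (Int.gcd (n * w) s : ℤ) = (n * m) * (Int.gcd (n * w) s : ℤ) from rfl]
    refine mul_dvd_mul ?_ ?_
    · exact mul_dvd_mul_right (Int.natAbs_dvd.mpr dvd_rfl) m
    · exact Int.dvd_coe_gcd ((Int.gcd_dvd_left _ _).trans (dvd_mul_left w n)) (Int.gcd_dvd_right _ _)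
  · rw [hg]
    rcases Int.natAbs_eq n with hn' | hn'
    · rcases h2 with h | h
      · left
        have := mul_dvd_mul_left n h
        rw [show n * (s * m * y + (Int.gcd w (s * m) : ℤ))
          = s * (n * m) * y + n * (Int.gcd w (s * m) : ℤ) by ring] at this
        rwa [← hn']
      · right
        have := mul_dvd_mul_left n h
        rw [show n * (s * m * y - (Int.gcd w (s * m) : ℤ))
          = s * (n * m) * y - n * (Int.gcd w (s * m) : ℤ) by ring] at this
        rwa [← hn']
    · rcases h2 with h | h
      · right
        have := mul_dvd_mul_left n h
        rw [show n * (s * m * y + (Int.gcd w (s * m) : ℤ))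
          = s * (n * m) * y - (-n) * (Int.gcd w (s * m) : ℤ) by ring] at this
        rwa [show ((n.natAbs : ℤ)) = -n by omega]
      · left
        have := mul_dvd_mul_left n h
        rw [show n * (s * m * y - (Int.gcd w (s * m) : ℤ))
          = s * (n * m) * y + (-n) * (Int.gcd w (s * m) : ℤ) by ring] at this
        rwa [show ((n.natAbs : ℤ)) = -n by omega]
end

section
/- Let s = 24 and, for each i ≥ 0, let M_i = 1680·3^i. Then there exists a sequence of pairs of integers (a_i, b_i), i ≥ 0, such that for each i ≥ 0 every integer x satisfies at least one of the following: (A) the residue class x + sM_iℤ is contained in the union (a_i + sM_iℤ) ∪ (−a_i + sM_iℤ) ∪ (b_i + sM_iℤ) ∪ (−b_i + sM_iℤ); (B) there exists a positive divisor m of M_i and a nonzero integer w with x ≡ w (mod sm) such that w is a good representative of the s-good residue class w + smℤ. -/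
def maskD (p : ℕ × ℕ × ℤ × ℤ) : ℕ :=
  (((2^252)^160 - 1) / ((2^24)^p.1 - 1)) * ((2^252)^(p.2.1 / 252) * 2^(p.2.1 % 252))
def L : List (Nat × Nat × Int × Int) := [
  (1, 1, 1, 1),
  (1, 23, -1, 1),
  (1, 2, 2, 1),
  (1, 22, -2, 1),
  (1, 3, 3, 1),
  (1, 21, -3, 1),
  (1, 4, 4, 1),
  (1, 20, -4, 1),
  (1, 5, 5, 1),
  (1, 19, -5, 1),
  (1, 6, 6, 1),
  (1, 18, -6, 1),
  (1, 8, 8, 1),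
  (1, 16, -8, 1),
  (1, 9, 9, 1),
  (1, 15, -9, 1),
  (1, 12, 12, 1),
  (1, 0, 24, 1),
  (2, 7, 7, 1),
  (2, 41, -7, 1),
  (2, 10, 10, 1),
  (2, 38, -10, 1),
  (2, 14, 14, 2),
  (2, 34, -14, 2),
  (4, 11, 11, 4),
  (4, 85, -11, 4),
  (4, 35, 35, 4),
  (4, 61, -35, 4),
  (3, 7, 7, 3),
  (3, 65, -7, 3),
  (3, 31, 31, 3),
  (3, 41, -31, 3),
  (6, 17, 17, 2),
  (6, 127, -17, 2),
  (8, 13, 13, 4),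
  (8, 179, -13, 4),
  (8, 59, 59, 4),
  (8, 133, -59, 4),
  (16, 37, 37, 8),
  (16, 347, -37, 8),
  (16, 83, 83, 8),
  (16, 301, -83, 8),
  (5, 11, 11, 1),
  (5, 109, -11, 1),
  (6, 11, 11, 1),
  (6, 133, -11, 1),
  (6, 13, 13, 1),
  (6, 131, -13, 1),
  (7, 11, 11, 7),
  (7, 157, -11, 7),
  (7, 13, 13, 1),
  (7, 155, -13, 1),
  (7, 35, 35, 1),
  (7, 133, -35, 1),
  (7, 107, 107, 7),
  (7, 61, -107, 7),
  (112, 109, 109, 56),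
  (112, 2579, -109, 56),
  (112, 1381, 1381, 56),
  (112, 1307, -1381, 56),
  (10, 13, 13, 2),
  (10, 227, -13, 2),
  (10, 35, 35, 1),
  (10, 205, -35, 1),
  (10, 37, 37, 2),
  (10, 203, -37, 2),
  (42, 85, 85, 7),
  (42, 923, -85, 7),
  (84, 59, 59, 6),
  (84, 1957, -59, 6),
  (15, 35, 35, 3),
  (15, 325, -35, 3),
  (15, 83, 83, 3),
  (15, 277, -83, 3),
  (30, 61, 61, 5),
  (30, 659, -61, 5),
  (140, 59, 59, 20),
  (140, 3301, -59, 20),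
  (140, 1139, 1139, 20),
  (140, 2221, -1139, 20),
  (280, 83, 83, 28),
  (280, 6637, -83, 28),
  (280, 2267, 2267, 28),
  (280, 4453, -2267, 28),
  (560, 613, 613, 40),
  (560, 12827, -613, 40),
  (560, 877, 877, 40),
  (560, 12563, -877, 40)]
def U : ℕ := (L.map maskD).foldr (· ||| ·) 0
def E : ℕ := ((2^252)^5 * 2) ||| (((2^252)^24 * 2^251) ||| (((2^252)^135 * 2) ||| ((2^252)^154 * 2^251)))

set_option maxRecDepth 40000 in
theorem KEY : U ||| E = (2^252)^160 - 1 := by decide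

def rep (d : ℕ) : ℕ → ℕ
  | 0 => 0
  | q+1 => 1 + 2^d * rep d q

theorem rep_mul_add_one (d q : ℕ) : (2^d - 1) * rep d q + 1 = 2^(d*q) := by
  induction q with
  | zero => simp [rep]
  | succ q ih =>
    have h1 : 1 ≤ 2^d := Nat.one_le_two_pow
    have : (2^d - 1) * rep d (q+1) + 1
        = ((2^d - 1) + 1) + (2^d - 1) * (2^d * rep d q) := by rw [rep]; ring
    rw [this, Nat.sub_add_cancel h1]
    have : 2^d + (2^d - 1) * (2^d * rep d q) = 2^d * ((2^d - 1) * rep d q + 1) := by ring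
    rw [this, ih, ← pow_add]
    congr 1
    ring

theorem maskD_eq (m w0 : ℕ) (ws : ℤ × ℤ) (hm : 0 < m) (hdvd : m ∣ 1680) :
    maskD (m, w0, ws) = rep (24*m) (40320/(24*m)) * 2^w0 := by
  have hd : 0 < 24*m := by omega
  have hq : (24*m) * (40320/(24*m)) = 40320 := Nat.mul_div_cancel' (by
    obtain ⟨c, hc⟩ := hdvd
    exact ⟨c, by rw [show (40320:ℕ) = 24*1680 by norm_num, hc]; ring⟩)
  have h1 : ((2^252)^160 : ℕ) = 2^40320 := by rw [← pow_mul]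
  have h2 : ((2^24)^m : ℕ) = 2^(24*m) := by rw [← pow_mul]
  have h3 : ((2^252)^(w0/252) * 2^(w0 % 252) : ℕ) = 2^w0 := by
    rw [← pow_mul, ← pow_add, Nat.div_add_mod]
  have h4 : (2^40320 - 1) = (2^(24*m) - 1) * rep (24*m) (40320/(24*m)) := by
    have := rep_mul_add_one (24*m) (40320/(24*m))
    rw [hq] at this
    omega
  have h5 : 0 < 2^(24*m) - 1 := by
    have : (2:ℕ)^1 ≤ 2^(24*m) := Nat.pow_le_pow_right (by norm_num) (by omega)
    simp at this; omega
  show ((2^252)^160 - 1) / ((2^24)^m - 1) * ((2^252)^(w0/252) * 2^(w0 % 252)) = _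
  rw [h1, h2, h3, h4, Nat.mul_div_cancel_left _ h5]

theorem rep_testBit {d q i : ℕ} (hd : 0 < d) (h : (rep d q).testBit i = true) :
    ∃ t, i = d * t := by
  induction q generalizing i with
  | zero => simp [rep] at h
  | succ q ih =>
    rw [rep] at h
    match i with
    | 0 => exact ⟨0, by simp⟩
    | i+1 =>
      obtain ⟨d', rfl⟩ : ∃ d', d = d'+1 := ⟨d-1, by omega⟩
      rw [Nat.testBit_add_one] at h
      have he : (1 + 2^(d'+1) * rep (d'+1) q) / 2 = 2^d' * rep (d'+1) q := by
        have : 2^(d'+1) * rep (d'+1) q = 2 * (2^d' * rep (d'+1) q) := by ring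
        omega
      rw [he] at h
      rw [show 2^d' * rep (d'+1) q = rep (d'+1) q <<< d' by
        rw [Nat.shiftLeft_eq]; ring] at h
      rw [Nat.testBit_shiftLeft] at h
      have h1 : d' ≤ i := by
        by_contra hc
        simp [Nat.not_le.mp hc, show ¬ (i ≥ d') by omega] at h
      have h2 : (rep (d'+1) q).testBit (i - d') = true := by
        simpa [ge_iff_le, h1] using h
      obtain ⟨t, ht⟩ := ih h2
      refine ⟨t+1, ?_⟩
      have : (d'+1) * (t+1) = (d'+1)*t + (d'+1) := by ring
      omega

theorem mask_testBit {d q w0 i : ℕ} (hd : 0 < d) (h : (rep d q * 2^w0).testBit i = true) :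
    ∃ t, i = w0 + d * t := by
  rw [← Nat.shiftLeft_eq, Nat.testBit_shiftLeft] at h
  have h1 : w0 ≤ i := by
    by_contra hc
    simp [show ¬ (i ≥ w0) by omega] at h
  have h2 : (rep d q).testBit (i - w0) = true := by simpa [ge_iff_le, h1] using h
  obtain ⟨t, ht⟩ := rep_testBit hd h2
  exact ⟨t, by omega⟩

theorem foldr_testBit {α : Type} {l : List α} {f : α → ℕ} {i : ℕ}
    (h : ((l.map f).foldr (· ||| ·) 0).testBit i = true) :
    ∃ p ∈ l, (f p).testBit i = true := by
  induction l with
  | nil => simp at h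
  | cons a l ih =>
    rw [List.map_cons, List.foldr_cons, Nat.testBit_lor] at h
    rcases Bool.or_eq_true_iff.mp h with h | h
    · exact ⟨a, List.mem_cons_self, h⟩
    · obtain ⟨p, hp, hb⟩ := ih h
      exact ⟨p, List.mem_cons_of_mem a hp, hb⟩

def Bgood (i : ℕ) (x : ℤ) : Prop :=
  ∃ m : ℤ, 0 < m ∧ m ∣ (1680 * 3 ^ i : ℤ) ∧
    ∃ w : ℤ, w ≠ 0 ∧ (24 * m : ℤ) ∣ x - w ∧ IsGoodRep 24 w m

def Chk : ℕ × ℕ × ℤ × ℤ → Bool := fun p =>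
  let m := p.1; let w0 := p.2.1; let w := p.2.2.1; let y := p.2.2.2
  decide (0 < m) && decide (m ∣ 1680) && decide (w ≠ 0) &&
  decide ((24*(m:ℤ)) ∣ ((w0:ℤ) - w)) &&
  decide (y * (Int.gcd w (24*(m:ℤ)) : ℤ) ∣ (m:ℤ) * (Int.gcd w 24 : ℤ)) &&
  (decide (w ∣ 24*(m:ℤ)*y + (Int.gcd w (24*(m:ℤ)) : ℤ)) ||
   decide (w ∣ 24*(m:ℤ)*y - (Int.gcd w (24*(m:ℤ)) : ℤ)))

theorem pair_good (m w0 : ℕ) (w y : ℤ) (hc : Chk (m, w0, w, y) = true)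
    (i : ℕ) (x : ℤ) (hx : (24*(m:ℤ)) ∣ x - w) : Bgood i x := by
  simp only [Chk, Bool.and_eq_true, Bool.or_eq_true, decide_eq_true_eq] at hc
  obtain ⟨⟨⟨⟨⟨hm, hdvd⟩, hw⟩, -⟩, hy1⟩, hy2⟩ := hc
  refine ⟨(m:ℤ), by exact_mod_cast hm, ?_, w, hw, hx, y, hy1, hy2⟩
  exact Dvd.dvd.mul_right (by exact_mod_cast Int.natCast_dvd_natCast.mpr hdvd) _

set_option maxRecDepth 10000 in
theorem LChk : ∀ p ∈ L, Chk p = true := by decide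

theorem finite_case (i : ℕ) (x : ℤ) (r : ℕ) (hr : (40320:ℤ) ∣ x - r) (hlt : r < 40320)
    (h1 : r ≠ 1261) (h2 : r ≠ 6299) (h3 : r ≠ 34021) (h4 : r ≠ 39059) : Bgood i x := by
  have hbit : (((2^252)^160 - 1 : ℕ)).testBit r = true := by
    rw [show ((2^252)^160 : ℕ) = 2^40320 from by rw [← pow_mul], Nat.testBit_two_pow_sub_one]
    exact decide_eq_true hlt
  rw [← KEY, Nat.testBit_lor] at hbit
  have hE : E.testBit r = false := by
    show (((2^252)^5 * 2) ||| (((2^252)^24 * 2^251) ||| (((2^252)^135 * 2) ||| ((2^252)^154 * 2^251)))).testBit r = false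
    rw [show ((2^252)^5 * 2 : ℕ) = 2^1261 from by rw [← pow_mul]; norm_num [← pow_succ],
        show ((2^252)^24 * 2^251 : ℕ) = 2^6299 from by rw [← pow_mul, ← pow_add],
        show ((2^252)^135 * 2 : ℕ) = 2^34021 from by rw [← pow_mul]; norm_num [← pow_succ],
        show ((2^252)^154 * 2^251 : ℕ) = 2^39059 from by rw [← pow_mul, ← pow_add]]
    simp [Nat.testBit_lor, Nat.testBit_two_pow_of_ne (Ne.symm h1),
      Nat.testBit_two_pow_of_ne (Ne.symm h2), Nat.testBit_two_pow_of_ne (Ne.symm h3),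
      Nat.testBit_two_pow_of_ne (Ne.symm h4)]
  rw [hE, Bool.or_false] at hbit
  obtain ⟨p, hpL, hpbit⟩ := foldr_testBit hbit
  have hchk := LChk p hpL
  obtain ⟨m, w0, w, y⟩ := p
  have hm : 0 < m ∧ m ∣ 1680 := by
    simp only [Chk, Bool.and_eq_true, decide_eq_true_eq] at hchk
    exact ⟨hchk.1.1.1.1.1, hchk.1.1.1.1.2⟩
  rw [maskD_eq m w0 (w, y) hm.1 hm.2] at hpbit
  obtain ⟨t, ht⟩ := mask_testBit (by omega) hpbit
  -- r = w0 + 24m * t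
  have hw0 : (24*(m:ℤ)) ∣ ((r:ℤ) - w0) := ⟨t, by push_cast [ht]; ring⟩
  have h40320 : (24*(m:ℤ)) ∣ 40320 := by
    obtain ⟨c, hc⟩ := hm.2
    refine ⟨(c:ℤ), ?_⟩
    have h1680 : (1680:ℤ) = (m:ℤ)*c := by exact_mod_cast hc
    rw [show (40320:ℤ) = 24*1680 from by norm_num, h1680]; ring
  have hxw0 : (24*(m:ℤ)) ∣ x - w0 := by
    have := dvd_add (dvd_trans h40320 hr) hw0
    simpa using this
  have hP3 : (24*(m:ℤ)) ∣ ((w0:ℤ) - w) := by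
    simp only [Chk, Bool.and_eq_true, decide_eq_true_eq] at hchk
    exact hchk.1.1.2
  have hxw : (24*(m:ℤ)) ∣ x - w := by
    have := dvd_add hxw0 hP3
    simpa using this
  exact pair_good m w0 w y hchk i x hxw

theorem threeAdic (i k' : ℕ) (hk : k' ≤ i) (x y₀ ε e : ℤ)
    (hε : ε = 1 ∨ ε = -1)
    (hy : y₀ = 1 ∨ y₀ = 5 ∨ y₀ = 7 ∨ y₀ = 35)
    (he : x - ε = 3^(k'+1) * e)
    (hey : (3:ℤ) ∣ e - y₀)
    (h16 : (16:ℤ) ∣ x - (4*y₀*3^(k'+1) + ε))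
    (h35 : y₀ ∣ x - ε) : Bgood i x := by
  have hε2 : ε * ε = 1 := by rcases hε with h | h <;> rw [h] <;> norm_num
  have hy1 : 1 ≤ y₀ := by rcases hy with h|h|h|h <;> rw [h] <;> norm_num
  have h3p : (3:ℤ) ≤ 3^(k'+1) := by
    calc (3:ℤ) = 3^1 := by norm_num
    _ ≤ 3^(k'+1) := pow_le_pow_right₀ (by norm_num) (by omega)
  have h12 : (12:ℤ) ≤ 4*y₀*3^(k'+1) := by nlinarith
  set w : ℤ := 4*y₀*3^(k'+1) + ε with hw
  set m : ℤ := 2*3^(k'+1)*y₀ with hm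
  have hwne : w ≠ 0 := by
    rcases hε with h | h <;> rw [hw, h] <;> intro hc <;> linarith
  have hmpos : 0 < m := by positivity
  have hmdvd : m ∣ (1680 * 3^i : ℤ) := by
    have d1 : 2*y₀ ∣ (70:ℤ) := by rcases hy with h|h|h|h <;> rw [h] <;> norm_num
    have d2 : (3:ℤ)^(k'+1) ∣ 3^(i+1) := pow_dvd_pow 3 (by omega)
    have := mul_dvd_mul d1 d2
    have h70 : (70:ℤ)*3^(i+1) ∣ 1680*3^i := ⟨8, by ring⟩
    refine dvd_trans ?_ h70
    have : m = (2*y₀)*3^(k'+1) := by rw [hm]; ring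
    rw [this]; exact mul_dvd_mul d1 d2
  -- congruence 24m | x - w
  have d2 : (3:ℤ)^(k'+2) ∣ x - w := by
    obtain ⟨c, hc⟩ := hey
    exact ⟨c - y₀, by rw [hw]; linear_combination he + 3^(k'+1) * hc⟩
  have d3 : y₀ ∣ x - w := by
    have : x - w = (x - ε) - 4*3^(k'+1)*y₀ := by rw [hw]; ring
    rw [this]
    exact dvd_sub h35 ⟨4*3^(k'+1), by ring⟩
  have c1 : IsCoprime (16:ℤ) (3^(k'+2)) := by
    have : IsCoprime (16:ℤ) 3 := by
      rw [Int.isCoprime_iff_gcd_eq_one]; rfl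
    exact this.pow_right
  have c163 : IsCoprime (16 * 3^(k'+2) : ℤ) y₀ := by
    have hc2 : IsCoprime y₀ (16:ℤ) := by
      rcases hy with h|h|h|h <;> rw [h, Int.isCoprime_iff_gcd_eq_one] <;> rfl
    have hc3 : IsCoprime y₀ (3:ℤ) := by
      rcases hy with h|h|h|h <;> rw [h, Int.isCoprime_iff_gcd_eq_one] <;> rfl
    exact (hc2.mul_right hc3.pow_right).symm
  have hxw : (24*m) ∣ x - w := by
    have h1 : (16 * 3^(k'+2) : ℤ) ∣ x - w := c1.mul_dvd h16 d2
    have h2 : (16 * 3^(k'+2) * y₀ : ℤ) ∣ x - w := c163.mul_dvd h1 d3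
    have : (24*m : ℤ) = 16 * 3^(k'+2) * y₀ := by rw [hm]; ring
    rwa [this]
  -- coprimality of w
  have hcop : IsCoprime w (4*y₀*3^(k'+1)) := ⟨ε, -ε, by rw [hw]; linear_combination hε2⟩
  have hcopsq : IsCoprime w ((4*y₀*3^(k'+1))^2) := hcop.pow_right
  have h24mdvd : (24*m : ℤ) ∣ (4*y₀*3^(k'+1))^2 := ⟨y₀ * 3^k', by rw [hm]; ring⟩
  have hcop24m : IsCoprime w (24*m) := hcopsq.of_isCoprime_of_dvd_right h24mdvd
  have hD : Int.gcd w (24*m) = 1 := Int.isCoprime_iff_gcd_eq_one.mp hcop24m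
  have hd : Int.gcd w 24 = 1 := Int.isCoprime_iff_gcd_eq_one.mp
    (hcop24m.of_isCoprime_of_dvd_right ⟨m, rfl⟩)
  refine ⟨m, hmpos, hmdvd, w, hwne, hxw, y₀ * 3^k', ?_, Or.inr ?_⟩
  · rw [hD, hd]
    push_cast
    rw [mul_one, mul_one]
    exact ⟨6, by rw [hm]; ring⟩
  · rw [hD]
    push_cast
    exact ⟨w - 2*ε, by rw [hw, hm]; linear_combination hε2⟩

theorem exists_first (n : ℕ) (N : ℤ) (h3 : (3:ℤ) ∣ N) (h : ¬ (3:ℤ)^(n+2) ∣ N) :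
    ∃ k', k' ≤ n ∧ (3:ℤ)^(k'+1) ∣ N ∧ ¬ (3:ℤ)^(k'+2) ∣ N := by
  induction n with
  | zero => exact ⟨0, le_rfl, by simpa using h3, h⟩
  | succ n ih =>
    by_cases hc : (3:ℤ)^(n+2) ∣ N
    · exact ⟨n+1, le_rfl, hc, h⟩
    · obtain ⟨k', h1, h2, h3'⟩ := ih hc
      exact ⟨k', by omega, h2, h3'⟩

theorem nine_pow (a : ℕ) : (4:ℤ) ∣ 3^(a+a) - 1 := by
  induction a with
  | zero => norm_num
  | succ a ih =>
    obtain ⟨c, hc⟩ := ih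
    refine ⟨9*c + 2, ?_⟩
    have h9 : (3:ℤ)^(a+1+(a+1)) = 9 * 3^(a+a) := by ring
    rw [h9]; linear_combination 9*hc

theorem excCase (i : ℕ) (x : ℤ) (rt ε : ℤ)
    (hε : ε = 1 ∨ ε = -1)
    (h13440 : (13440:ℤ) ∣ x - rt)
    (h35r : (35:ℤ) ∣ rt - ε)
    (h12r : (16:ℤ) ∣ rt - ε - 12)
    (h3r : (3:ℤ) ∣ rt - ε)
    (hnot : ¬ (3:ℤ)^(i+2) ∣ x - ε) : Bgood i x := by
  have hN3 : (3:ℤ) ∣ x - ε := by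
    have h : x - ε = (x - rt) + (rt - ε) := by ring
    rw [h]
    exact dvd_add (dvd_trans ⟨4480, by norm_num⟩ h13440) h3r
  obtain ⟨k', hk, h1, h2⟩ := exists_first i (x - ε) hN3 hnot
  obtain ⟨e, he⟩ := h1
  have hne : ¬ (3:ℤ) ∣ e := by
    intro ⟨c, hc⟩
    exact h2 ⟨c, by rw [he, hc, pow_succ]; ring⟩
  have hemod : e % 3 = 1 ∨ e % 3 = 2 := by
    have h0 := Int.emod_nonneg e (by norm_num : (3:ℤ) ≠ 0)
    have h1' := Int.emod_lt_of_pos e (by norm_num : (0:ℤ) < 3)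
    have : e % 3 ≠ 0 := fun hc => hne (Int.dvd_of_emod_eq_zero hc)
    omega
  have h16x : (16:ℤ) ∣ x - rt := dvd_trans ⟨840, by norm_num⟩ h13440
  have h35x : (35:ℤ) ∣ x - rt := dvd_trans ⟨384, by norm_num⟩ h13440
  have h35N : (35:ℤ) ∣ x - ε := by
    have h : x - ε = (x - rt) + (rt - ε) := by ring
    rw [h]; exact dvd_add h35x h35r
  have main : ∀ y₀ : ℤ, (y₀ = 1 ∨ y₀ = 5 ∨ y₀ = 7 ∨ y₀ = 35) → (3:ℤ) ∣ e - y₀ →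
      (16:ℤ) ∣ 12 - 4*y₀*3^(k'+1) → Bgood i x := by
    intro y₀ hy hey h16'
    refine threeAdic i k' hk x y₀ ε e hε hy he hey ?_ ?_
    · have h : x - (4*y₀*3^(k'+1) + ε) = (x - rt) + (rt - ε - 12) + (12 - 4*y₀*3^(k'+1)) := by
        ring
      rw [h]
      exact dvd_add (dvd_add h16x h12r) h16'
    · have hy35 : y₀ ∣ (35:ℤ) := by rcases hy with h|h|h|h <;> rw [h] <;> norm_num
      exact dvd_trans hy35 h35N
  have hpar : (4:ℤ) ∣ 3^(k'+1) - 3 ∨ (4:ℤ) ∣ 3^(k'+1) - 1 := by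
    rcases Nat.even_or_odd k' with ⟨a, ha⟩ | ⟨a, ha⟩
    · left
      obtain ⟨c, hc⟩ := nine_pow a
      refine ⟨3*c, ?_⟩
      rw [ha]
      have h9 : (3:ℤ)^(a+a+1) = 3 * 3^(a+a) := by ring
      rw [h9]; linear_combination 3*hc
    · right
      obtain ⟨c, hc⟩ := nine_pow (a+1)
      refine ⟨c, ?_⟩
      rw [ha]
      have h9 : (3:ℤ)^(2*a+1+1) = 3^(a+1+(a+1)) := by ring
      rw [h9]; linear_combination hc
  rcases hpar with ⟨c, hc⟩ | ⟨c, hc⟩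
  · rcases hemod with hm1 | hm1
    · exact main 1 (by norm_num) (by omega) ⟨-c, by linear_combination -4*hc⟩
    · exact main 5 (by norm_num) (by omega) ⟨-3-5*c, by linear_combination -20*hc⟩
  · rcases hemod with hm1 | hm1
    · exact main 7 (by norm_num) (by omega) ⟨-1-7*c, by linear_combination -28*hc⟩
    · exact main 35 (by norm_num) (by omega) ⟨-8-35*c, by linear_combination -140*hc⟩

def aseq : ℕ → ℤ := fun n => Nat.rec (motive := fun _ => ℤ) 1261
  (fun j prev => prev + 4480 * 3^(j+2) * ((-((prev - 1) / 3^(j+2))) % 3)) n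

def bseq : ℕ → ℤ := fun n => Nat.rec (motive := fun _ => ℤ) 6299
  (fun j prev => prev + 4480 * 3^(j+2) * ((-((prev + 1) / 3^(j+2))) % 3)) n

theorem seq_inv (c₀ r₀ : ℤ) (f : ℕ → ℤ) (hf0 : f 0 = r₀)
    (hf : ∀ j, f (j+1) = f j + 4480 * 3^(j+2) * ((-((f j + c₀) / 3^(j+2))) % 3))
    (hbase : (9:ℤ) ∣ r₀ + c₀) :
    ∀ i, (13440:ℤ) ∣ f i - r₀ ∧ (3:ℤ)^(i+2) ∣ f i + c₀ := by
  intro i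
  induction i with
  | zero => exact ⟨by rw [hf0]; simp, by rw [hf0]; simpa using hbase⟩
  | succ i ih =>
    obtain ⟨ih1, ih2⟩ := ih
    obtain ⟨e, hee⟩ := ih2
    have hdiv : (f i + c₀) / 3^(i+2) = e := by
      rw [hee]
      exact Int.mul_ediv_cancel_left e (pow_ne_zero _ (by norm_num))
    set c : ℤ := (-e) % 3 with hcdef
    have hstep : f (i+1) = f i + 4480 * 3^(i+2) * c := by
      rw [hf i, hdiv]
    constructor
    · rw [hstep]
      have h1 : (13440:ℤ) ∣ 4480 * 3^(i+2) * c := ⟨3^(i+1) * c, by ring⟩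
      have h2 : f i + 4480 * 3^(i+2) * c - r₀ = (f i - r₀) + 4480 * 3^(i+2) * c := by ring
      rw [h2]
      exact dvd_add ih1 h1
    · rw [hstep]
      have h3c : (3:ℤ) ∣ e + c := by
        have hd := Int.emod_emod_of_dvd (-e) (dvd_refl (3:ℤ))
        have h' : (3:ℤ) ∣ (-e) - ((-e) % 3) := Int.dvd_self_sub_of_emod_eq rfl
        obtain ⟨t, ht⟩ := h'
        exact ⟨-t, by linear_combination -ht⟩
      obtain ⟨t, ht⟩ := h3c
      have h4 : (3:ℤ) ∣ e + 4480 * c := ⟨t + 1493*c, by linear_combination ht⟩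
      obtain ⟨u, hu⟩ := h4
      exact ⟨u, by linear_combination hee + 3^(i+2)*hu⟩

theorem aseq_inv (i : ℕ) : (13440:ℤ) ∣ aseq i - 1261 ∧ (3:ℤ)^(i+2) ∣ aseq i - 1 := by
  have := seq_inv (-1) 1261 aseq rfl (fun j => rfl) (by norm_num)
  simpa [sub_eq_add_neg] using this i

theorem bseq_inv (i : ℕ) : (13440:ℤ) ∣ bseq i - 6299 ∧ (3:ℤ)^(i+2) ∣ bseq i + 1 := by
  have := seq_inv 1 6299 bseq rfl (fun j => rfl) (by norm_num)
  simpa using this i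

theorem IsGoodRep_neg {w m : ℤ} (h : IsGoodRep 24 w m) : IsGoodRep 24 (-w) m := by
  obtain ⟨y, h1, h2⟩ := h
  refine ⟨y, ?_, ?_⟩
  · simpa [Int.neg_gcd] using h1
  · simpa [Int.neg_gcd, neg_dvd] using h2

theorem Bgood_neg {i : ℕ} {x : ℤ} (h : Bgood i (-x)) : Bgood i x := by
  obtain ⟨m, hm, hdvd, w, hw, hxw, hgood⟩ := h
  refine ⟨m, hm, hdvd, -w, neg_ne_zero.mpr hw, ?_, IsGoodRep_neg hgood⟩
  obtain ⟨t, ht⟩ := hxw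
  exact ⟨-t, by linear_combination -ht⟩

theorem optionA (i : ℕ) (x v : ℤ) (h4480 : (4480:ℤ) ∣ x - v) (h3 : (3:ℤ)^(i+2) ∣ x - v) :
    (24 * (1680 * 3^i) : ℤ) ∣ x - v := by
  have hc : IsCoprime (4480:ℤ) (3^(i+2)) := by
    have h : IsCoprime (4480:ℤ) 3 := by rw [Int.isCoprime_iff_gcd_eq_one]; rfl
    exact h.pow_right
  have hd := hc.mul_dvd h4480 h3
  have heq : (24 * (1680 * 3^i) : ℤ) = 4480 * 3^(i+2) := by ring
  rwa [heq]


theorem stmt19 :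
    ∃ a b : ℕ → ℤ, ∀ i : ℕ, ∀ x : ℤ,
      ({z : ℤ | (24 * (1680 * 3 ^ i) : ℤ) ∣ z - x} ⊆
        {z : ℤ | (24 * (1680 * 3 ^ i) : ℤ) ∣ z - a i} ∪
        {z : ℤ | (24 * (1680 * 3 ^ i) : ℤ) ∣ z + a i} ∪
        {z : ℤ | (24 * (1680 * 3 ^ i) : ℤ) ∣ z - b i} ∪
        {z : ℤ | (24 * (1680 * 3 ^ i) : ℤ) ∣ z + b i}) ∨
      (∃ m : ℤ, 0 < m ∧ m ∣ (1680 * 3 ^ i : ℤ) ∧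
        ∃ w : ℤ, w ≠ 0 ∧ (24 * m : ℤ) ∣ x - w ∧ IsGoodRep 24 w m) := by
  refine ⟨aseq, bseq, ?_⟩
  intro i x
  set r : ℕ := (x % 40320).toNat with hrdef
  have h0 : (0:ℤ) ≤ x % 40320 := Int.emod_nonneg x (by norm_num)
  have hlt' : x % 40320 < 40320 := Int.emod_lt_of_pos x (by norm_num)
  have hr0 : (r:ℤ) = x % 40320 := Int.toNat_of_nonneg h0
  have hrlt : r < 40320 := by omega
  have hrdvd : (40320:ℤ) ∣ x - r := by
    rw [hr0]
    exact ⟨x / 40320, by rw [Int.emod_def]; ring⟩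
  have h13440 : ∀ v : ℤ, (v:ℤ) = r ∨ v + r = 40320 → (13440:ℤ) ∣ x - v ∨ (13440:ℤ) ∣ x + v := by
    intro v hv
    rcases hv with hv | hv
    · left
      have : x - v = x - r := by rw [hv]
      rw [this]
      exact dvd_trans ⟨3, by norm_num⟩ hrdvd
    · right
      have : x + v = (x - r) + 40320 := by omega
      rw [this]
      exact dvd_add (dvd_trans ⟨3, by norm_num⟩ hrdvd) ⟨3, by norm_num⟩
  by_cases hr1 : r = 1261
  · -- x ≡ 1261 mod 40320
    have hx : (13440:ℤ) ∣ x - 1261 := by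
      have : x - 1261 = x - r := by rw [hr1]; norm_num
      rw [this]; exact dvd_trans ⟨3, by norm_num⟩ hrdvd
    by_cases h3 : (3:ℤ)^(i+2) ∣ x - 1
    · left
      obtain ⟨a1, a2⟩ := aseq_inv i
      have hxa : (24*(1680*3^i):ℤ) ∣ x - aseq i := by
        refine optionA i x (aseq i) ?_ ?_
        · have h : x - aseq i = (x - 1261) - (aseq i - 1261) := by ring
          rw [h]
          exact dvd_sub (dvd_trans ⟨3, by norm_num⟩ hx) (dvd_trans ⟨3, by norm_num⟩ a1)
        · have h : x - aseq i = (x - 1) - (aseq i - 1) := by ring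
          rw [h]
          exact dvd_sub h3 a2
      intro z hz
      simp only [Set.mem_setOf_eq] at hz
      simp only [Set.mem_union, Set.mem_setOf_eq]
      left; left; left
      have h : z - aseq i = (z - x) + (x - aseq i) := by ring
      rw [h]
      exact dvd_add hz hxa
    · exact Or.inr (excCase i x 1261 1 (Or.inl rfl) hx (by norm_num) (by norm_num)
        (by norm_num) h3)
  · by_cases hr2 : r = 6299
    · have hx : (13440:ℤ) ∣ x - 6299 := by
        have : x - 6299 = x - r := by rw [hr2]; norm_num
        rw [this]; exact dvd_trans ⟨3, by norm_num⟩ hrdvd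
      by_cases h3 : (3:ℤ)^(i+2) ∣ x + 1
      · left
        obtain ⟨b1, b2⟩ := bseq_inv i
        have hxb : (24*(1680*3^i):ℤ) ∣ x - bseq i := by
          refine optionA i x (bseq i) ?_ ?_
          · have h : x - bseq i = (x - 6299) - (bseq i - 6299) := by ring
            rw [h]
            exact dvd_sub (dvd_trans ⟨3, by norm_num⟩ hx) (dvd_trans ⟨3, by norm_num⟩ b1)
          · have h : x - bseq i = (x + 1) - (bseq i + 1) := by ring
            rw [h]
            exact dvd_sub h3 b2
        intro z hz
        simp only [Set.mem_setOf_eq] at hz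
        simp only [Set.mem_union, Set.mem_setOf_eq]
        left; right
        have h : z - bseq i = (z - x) + (x - bseq i) := by ring
        rw [h]
        exact dvd_add hz hxb
      · refine Or.inr (excCase i x 6299 (-1) (Or.inr rfl) hx (by norm_num) (by norm_num)
          (by norm_num) ?_)
        intro hc
        exact h3 (by simpa using hc)
    · by_cases hr3 : r = 34021
      · -- x ≡ -6299
        have hx : (13440:ℤ) ∣ -x - 6299 := by
          have : -x - 6299 = -((x - r) + 40320) := by rw [hr3]; push_cast; ring
          rw [this]
          exact dvd_neg.mpr (dvd_add (dvd_trans ⟨3, by norm_num⟩ hrdvd) ⟨3, by norm_num⟩)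
        by_cases h3 : (3:ℤ)^(i+2) ∣ -x + 1
        · left
          obtain ⟨b1, b2⟩ := bseq_inv i
          have hxb : (24*(1680*3^i):ℤ) ∣ (-x) - bseq i := by
            refine optionA i (-x) (bseq i) ?_ ?_
            · have h : -x - bseq i = (-x - 6299) - (bseq i - 6299) := by ring
              rw [h]
              exact dvd_sub (dvd_trans ⟨3, by norm_num⟩ hx) (dvd_trans ⟨3, by norm_num⟩ b1)
            · have h : -x - bseq i = (-x + 1) - (bseq i + 1) := by ring
              rw [h]
              exact dvd_sub h3 b2
          intro z hz
          simp only [Set.mem_setOf_eq] at hz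
          simp only [Set.mem_union, Set.mem_setOf_eq]
          right
          have h : z + bseq i = (z - x) - ((-x) - bseq i) := by ring
          rw [h]
          exact dvd_sub hz hxb
        · refine Or.inr (Bgood_neg (excCase i (-x) 6299 (-1) (Or.inr rfl) hx (by norm_num)
            (by norm_num) (by norm_num) ?_))
          intro hc
          exact h3 (by simpa [sub_neg_eq_add] using hc)
      · by_cases hr4 : r = 39059
        · -- x ≡ -1261
          have hx : (13440:ℤ) ∣ -x - 1261 := by
            have : -x - 1261 = -((x - r) + 40320) := by rw [hr4]; push_cast; ring
            rw [this]
            exact dvd_neg.mpr (dvd_add (dvd_trans ⟨3, by norm_num⟩ hrdvd) ⟨3, by norm_num⟩)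
          by_cases h3 : (3:ℤ)^(i+2) ∣ -x - 1
          · left
            obtain ⟨a1, a2⟩ := aseq_inv i
            have hxa : (24*(1680*3^i):ℤ) ∣ (-x) - aseq i := by
              refine optionA i (-x) (aseq i) ?_ ?_
              · have h : -x - aseq i = (-x - 1261) - (aseq i - 1261) := by ring
                rw [h]
                exact dvd_sub (dvd_trans ⟨3, by norm_num⟩ hx) (dvd_trans ⟨3, by norm_num⟩ a1)
              · have h : -x - aseq i = (-x - 1) - (aseq i - 1) := by ring
                rw [h]
                exact dvd_sub h3 a2
            intro z hz
            simp only [Set.mem_setOf_eq] at hz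
            simp only [Set.mem_union, Set.mem_setOf_eq]
            left; left; right
            have h : z + aseq i = (z - x) - ((-x) - aseq i) := by ring
            rw [h]
            exact dvd_sub hz hxa
          · exact Or.inr (Bgood_neg (excCase i (-x) 1261 1 (Or.inl rfl) hx (by norm_num)
              (by norm_num) (by norm_num) h3))
        · exact Or.inr (finite_case i x r hrdvd hrlt hr1 hr2 hr3 hr4)
end
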